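/- Every 5-dimensional linear subspace W of ℝ⁷ contains a 3-dimensional associative subspace and a 4-dimensional coassociative subspace. -/

import Mathlib

/-- The elementary 3-form `e^{abc}` on `ℝ⁷` evaluated on `(X, Y, Z)`:
the determinant of the matrix of the `a, b, c` components. -/
def eTriple (a b c : Fin 7) (X Y Z : EuclideanSpace ℝ (Fin 7)) : ℝ :=
  Matrix.det !![X a, X b, X c; Y a, Y b, Y c; Z a, Z b, Z c]

/-- The standard `G₂` 3-form
`φ₀ = e¹²³ − e¹∧(e⁴⁵+e⁶⁷) − e²∧(e⁴⁶+e⁷⁵) − e³∧(e⁴⁷+e⁵⁶)` on `ℝ⁷`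
(indices written `1,…,7`, shifted here to `0,…,6`). -/
def phiZero (X Y Z : EuclideanSpace ℝ (Fin 7)) : ℝ :=
  eTriple 0 1 2 X Y Z - eTriple 0 3 4 X Y Z - eTriple 0 5 6 X Y Z
    - eTriple 1 3 5 X Y Z - eTriple 1 6 4 X Y Z
    - eTriple 2 3 6 X Y Z - eTriple 2 4 5 X Y Z

/-- The cross product on `ℝ⁷`, characterised by `⟪X × Y, Z⟫ = φ₀(X, Y, Z)`. -/
noncomputable def crossG2 (X Y : EuclideanSpace ℝ (Fin 7)) : EuclideanSpace ℝ (Fin 7) :=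
  WithLp.toLp 2 (fun i => phiZero X Y (EuclideanSpace.single i 1))

/-- A 3-dimensional subspace is associative if it is closed under the cross product. -/
def IsAssociative (A : Submodule ℝ (EuclideanSpace ℝ (Fin 7))) : Prop :=
  Module.finrank ℝ A = 3 ∧ ∀ x ∈ A, ∀ y ∈ A, crossG2 x y ∈ A

/-- A 4-dimensional subspace is coassociative if its orthogonal complement is
associative. -/
def IsCoassociative (C : Submodule ℝ (EuclideanSpace ℝ (Fin 7))) : Prop :=
  Module.finrank ℝ C = 4 ∧ IsAssociative Cᗮ

/-!
For orthogonal nonzero `x, y`, the identity `x × (x × y) = ⟪x, y⟫ x - ‖x‖² y` and its mirror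
image show that `x, y, x × y` span a 3-dimensional subspace closed under `×`, i.e. an
associative one. If `dim W ≥ 5` and `0 ≠ x ∈ W`, the linear map
`y ↦ (proj_{Wᗮ} (x × y), ⟪x, y⟫)` from `W` to `Wᗮ × ℝ`, of dimension at most 3, kills some
`y ≠ 0`, and then `x, y, x × y` all lie in `W`. Dually, if `dim W = 5`, an orthonormal basis
`u, v` of the plane `Wᗮ` spans an associative `A ⊇ Wᗮ`, and `Aᗮ ⊆ W` is coassociative.
-/

local notation "E7" => EuclideanSpace ℝ (Fin 7)

open RealInnerProductSpace Module Submodule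

theorem Submodule.apply_mem_span_of_forall_apply_mem {R M : Type*} [CommSemiring R]
    [AddCommMonoid M] [Module R M] (f : M →ₗ[R] M →ₗ[R] M) {s : Set M}
    (hs : ∀ a ∈ s, ∀ b ∈ s, f a b ∈ span R s) :
    ∀ x ∈ span R s, ∀ y ∈ span R s, f x y ∈ span R s :=
  map₂_le.mp <| by
    rw [map₂_span_span, span_le]
    rintro _ ⟨a, ha, b, hb, rfl⟩
    exact hs a ha b hb

lemma crossG2_eq (x y : E7) : crossG2 x y = !₂[
    x 1 * y 2 - x 2 * y 1 - x 3 * y 4 + x 4 * y 3 - x 5 * y 6 + x 6 * y 5,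
    x 2 * y 0 - x 0 * y 2 - x 3 * y 5 + x 5 * y 3 - x 6 * y 4 + x 4 * y 6,
    x 0 * y 1 - x 1 * y 0 - x 3 * y 6 + x 6 * y 3 - x 4 * y 5 + x 5 * y 4,
    x 0 * y 4 - x 4 * y 0 + x 1 * y 5 - x 5 * y 1 + x 2 * y 6 - x 6 * y 2,
    x 3 * y 0 - x 0 * y 3 + x 6 * y 1 - x 1 * y 6 + x 2 * y 5 - x 5 * y 2,
    x 0 * y 6 - x 6 * y 0 + x 3 * y 1 - x 1 * y 3 + x 4 * y 2 - x 2 * y 4,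
    x 5 * y 0 - x 0 * y 5 + x 1 * y 4 - x 4 * y 1 + x 3 * y 2 - x 2 * y 3] := by
  ext i
  fin_cases i <;>
    simp [crossG2, phiZero, eTriple, Matrix.det_fin_three, PiLp.single_apply] <;> ring

noncomputable def crossG2Bilin : E7 →ₗ[ℝ] E7 →ₗ[ℝ] E7 :=
  LinearMap.mk₂ ℝ crossG2
    (fun x y z => by ext i; fin_cases i <;> simp [crossG2_eq] <;> ring)
    (fun c x y => by ext i; fin_cases i <;> simp [crossG2_eq] <;> ring)
    (fun x y z => by ext i; fin_cases i <;> simp [crossG2_eq] <;> ring)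
    (fun c x y => by ext i; fin_cases i <;> simp [crossG2_eq] <;> ring)

@[simp]
lemma crossG2Bilin_apply (x y : E7) : crossG2Bilin x y = crossG2 x y := rfl

lemma crossG2_self (x : E7) : crossG2 x x = 0 := by
  ext i
  fin_cases i <;> simp [crossG2_eq] <;> ring

lemma crossG2_anticomm (x y : E7) : crossG2 y x = -crossG2 x y := by
  ext i
  fin_cases i <;> simp [crossG2_eq] <;> ring

lemma inner_self_crossG2 (x y : E7) : ⟪x, crossG2 x y⟫ = 0 := by
  simp [PiLp.inner_apply, Fin.sum_univ_seven, crossG2_eq]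
  ring

lemma inner_crossG2_self (x y : E7) : ⟪y, crossG2 x y⟫ = 0 := by
  simp [PiLp.inner_apply, Fin.sum_univ_seven, crossG2_eq]
  ring

lemma crossG2_crossG2_self_left (x y : E7) :
    crossG2 x (crossG2 x y) = ⟪x, y⟫ • x - ⟪x, x⟫ • y := by
  ext i
  -- expanded first, so that `simp` does not turn `⟪x, x⟫` into `‖x‖ ^ 2`
  simp only [PiLp.inner_apply, RCLike.inner_apply, conj_trivial, Fin.sum_univ_seven]
  fin_cases i <;> simp [crossG2_eq] <;> ring

lemma crossG2_crossG2_self_right (x y : E7) :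
    crossG2 (crossG2 x y) y = ⟪x, y⟫ • y - ⟪y, y⟫ • x := by
  ext i
  simp only [PiLp.inner_apply, RCLike.inner_apply, conj_trivial, Fin.sum_univ_seven]
  fin_cases i <;> simp [crossG2_eq] <;> ring

lemma isAssociative_span_crossG2 {x y : E7} (hx : x ≠ 0) (hy : y ≠ 0) (hxy : ⟪x, y⟫ = 0) :
    IsAssociative (span ℝ {x, y, crossG2 x y}) := by
  have hz : crossG2 x y ≠ 0 := fun h => hy <| by
    have h0 : crossG2 x 0 = 0 := (crossG2Bilin x).map_zero
    simpa [h, h0, hxy, hx] using crossG2_crossG2_self_left x y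
  have hli : LinearIndependent ℝ ![x, y, crossG2 x y] := by
    refine linearIndependent_of_ne_zero_of_inner_eq_zero (fun i => ?_) fun i j hij => ?_
    · fin_cases i <;> assumption
    · fin_cases i <;> fin_cases j <;>
        simp [hxy, real_inner_comm x y, real_inner_comm x (crossG2 x y),
          real_inner_comm y (crossG2 x y), inner_self_crossG2, inner_crossG2_self]
          at hij ⊢
  refine ⟨?_, apply_mem_span_of_forall_apply_mem crossG2Bilin fun a ha b hb => ?_⟩
  · rw [show ({x, y, crossG2 x y} : Set E7) = Set.range ![x, y, crossG2 x y] by ext; simp; tauto,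
      finrank_span_eq_card hli, Fintype.card_fin]
  · set S := span ℝ {x, y, crossG2 x y}
    have hxS : x ∈ S := subset_span (by simp)
    have hyS : y ∈ S := subset_span (by simp)
    have hzS : crossG2 x y ∈ S := subset_span (by simp)
    have hcomb : ∀ (a b : ℝ) {u v : E7}, u ∈ S → v ∈ S → a • u - b • v ∈ S :=
      fun a b _ _ hu hv => sub_mem (smul_mem S a hu) (smul_mem S b hv)
    rw [crossG2Bilin_apply]
    rcases ha with ha | ha | ha <;> rcases hb with hb | hb | hb <;> subst a b
    · rw [crossG2_self]; exact zero_mem S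
    · exact hzS
    · rw [crossG2_crossG2_self_left]; exact hcomb _ _ hxS hyS
    · rw [crossG2_anticomm]; exact neg_mem hzS
    · rw [crossG2_self]; exact zero_mem S
    · rw [crossG2_anticomm (crossG2 x y), crossG2_crossG2_self_right]
      exact neg_mem (hcomb _ _ hyS hxS)
    · rw [crossG2_anticomm x, crossG2_crossG2_self_left]
      exact neg_mem (hcomb _ _ hxS hyS)
    · rw [crossG2_crossG2_self_right]; exact hcomb _ _ hyS hxS
    · rw [crossG2_self]; exact zero_mem S

lemma exists_orthogonal_crossG2_mem (W : Submodule ℝ E7) (hW : 5 ≤ finrank ℝ W) (x : E7) :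
    ∃ y ∈ W, y ≠ 0 ∧ ⟪x, y⟫ = 0 ∧ crossG2 x y ∈ W := by
  let f : W →ₗ[ℝ] Wᗮ × ℝ :=
    ((Wᗮ.orthogonalProjectionOnto : E7 →ₗ[ℝ] Wᗮ) ∘ₗ crossG2Bilin x ∘ₗ W.subtype).prod
      (innerₗ E7 x ∘ₗ W.subtype)
  have hdim : finrank ℝ (Wᗮ × ℝ) < finrank ℝ W := by
    have := W.finrank_add_finrank_orthogonal
    rw [finrank_euclideanSpace_fin] at this
    rw [finrank_prod, finrank_self]
    omega
  obtain ⟨⟨y, hyW⟩, hy, hy0⟩ := exists_mem_ne_zero_of_ne_bot (f.ker_ne_bot_of_finrank_lt hdim)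
  simp only [f, LinearMap.ker_prod, mem_inf, LinearMap.mem_ker, LinearMap.coe_comp,
    ContinuousLinearMap.coe_coe, coe_subtype, Function.comp_apply, crossG2Bilin_apply,
    orthogonalProjectionOnto_eq_zero_iff, orthogonal_orthogonal, innerₗ_apply_apply] at hy
  exact ⟨y, hyW, by simpa using hy0, hy.2, hy.1⟩

lemma exists_isAssociative_le (W : Submodule ℝ E7) (hW : 5 ≤ finrank ℝ W) :
    ∃ A ≤ W, IsAssociative A := by
  obtain ⟨x, hxW, hx⟩ := W.exists_mem_ne_zero_of_ne_bot (by rintro rfl; simp at hW)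
  obtain ⟨y, hyW, hy, hxy, hxyW⟩ := exists_orthogonal_crossG2_mem W hW x
  refine ⟨_, span_le.mpr ?_, isAssociative_span_crossG2 hx hy hxy⟩
  rintro _ (rfl | rfl | rfl) <;> assumption

lemma exists_isAssociative_ge (V : Submodule ℝ E7) (hV : finrank ℝ V = 2) :
    ∃ A, V ≤ A ∧ IsAssociative A := by
  let b := (stdOrthonormalBasis ℝ V).reindex (finCongr hV)
  have hb : ∀ i, (b i : E7) ≠ 0 := fun i => by simpa using b.orthonormal.ne_zero i
  have hb01 : ⟪(b 0 : E7), b 1⟫ = 0 := by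
    rw [← coe_inner]
    exact b.orthonormal.inner_eq_zero (by decide)
  refine ⟨_, fun v hv => ?_, isAssociative_span_crossG2 (hb 0) (hb 1) hb01⟩
  have hv' : v = b.repr ⟨v, hv⟩ 0 • (b 0 : E7) + b.repr ⟨v, hv⟩ 1 • (b 1 : E7) := by
    simpa [Fin.sum_univ_two] using (congrArg Subtype.val (b.sum_repr ⟨v, hv⟩)).symm
  rw [hv']
  exact add_mem (smul_mem _ _ (subset_span (by simp))) (smul_mem _ _ (subset_span (by simp)))

lemma IsAssociative.isCoassociative_orthogonal {A : Submodule ℝ E7} (hA : IsAssociative A) :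
    IsCoassociative Aᗮ := by
  refine ⟨?_, by rwa [orthogonal_orthogonal]⟩
  have := A.finrank_add_finrank_orthogonal
  rw [hA.1, finrank_euclideanSpace_fin] at this
  omega

lemma exists_isCoassociative_le (W : Submodule ℝ E7) (hW : finrank ℝ W = 5) :
    ∃ C ≤ W, IsCoassociative C := by
  have := W.finrank_add_finrank_orthogonal
  rw [hW, finrank_euclideanSpace_fin] at this
  obtain ⟨A, hWA, hA⟩ := exists_isAssociative_ge Wᗮ (by omega)
  exact ⟨Aᗮ, by simpa using orthogonal_le hWA, hA.isCoassociative_orthogonal⟩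

theorem five_dim_contains_assoc_and_coassoc
    (W : Submodule ℝ (EuclideanSpace ℝ (Fin 7)))
    (hW : Module.finrank ℝ W = 5) :
    (∃ A : Submodule ℝ (EuclideanSpace ℝ (Fin 7)), A ≤ W ∧ IsAssociative A) ∧
    (∃ C : Submodule ℝ (EuclideanSpace ℝ (Fin 7)), C ≤ W ∧ IsCoassociative C) :=
  ⟨exists_isAssociative_le W hW.ge, exists_isCoassociative_le W hW⟩
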